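/- In any spacetime, if the closure of I^+(x) ∩ I^-(z) is compact for all pairs of points x, z, then the closure of J^+(x) ∩ J^-(z) is compact for all pairs x, z. -/

import Mathlib

open Set Filter Topology

/-- An abstract spacetime: a topological space equipped with a chronological
relation `chron` (`I⁺`), a causal relation `causal` (`J⁺`), and a conformal
family of Lorentzian length functionals `lenOn Ω γ A` (the `Ωg`-length of the
curve `γ` restricted to the parameter set `A`; `Ω = 1` is the base metric `g`),
satisfying the standard causality axioms. -/
structure Spacetime (M : Type*) [TopologicalSpace M] where
  chron : M → M → Prop
  causal : M → M → Prop
  lenOn : (M → ℝ) → (ℝ → M) → Set ℝ → ENNReal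
  causal_refl : ∀ x, causal x x
  causal_trans : ∀ {x y z}, causal x y → causal y z → causal x z
  chron_causal : ∀ {x y}, chron x y → causal x y
  push_up : ∀ {x y z}, causal x y → chron y z → chron x z
  push_down : ∀ {x y z}, chron x y → causal y z → chron x z
  chron_open : IsOpen {p : M × M | chron p.1 p.2}
  chron_fut : ∀ x, ∃ y, chron x y
  chron_past : ∀ x, ∃ y, chron y x

namespace Spacetime

variable {M : Type*} [TopologicalSpace M] (S : Spacetime M)

/-- The chronological future `I⁺(x)`. -/
def IPlus (x : M) : Set M := {y | S.chron x y}
/-- The chronological past `I⁻(x)`. -/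
def IMinus (x : M) : Set M := {y | S.chron y x}
/-- The causal future `J⁺(x)`. -/
def JPlus (x : M) : Set M := {y | S.causal x y}
/-- The causal past `J⁻(x)`. -/
def JMinus (x : M) : Set M := {y | S.causal y x}

/-- `γ` is a (future-directed, continuous) causal curve on the parameter set `A`. -/
def IsCausalCurveOn (γ : ℝ → M) (A : Set ℝ) : Prop :=
  ContinuousOn γ A ∧ ∀ ⦃s⦄, s ∈ A → ∀ ⦃t⦄, t ∈ A → s ≤ t → S.causal (γ s) (γ t)

/-- A curve (parametrized on `[0,∞)`) is future inextendible if it has no endpoint. -/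
def FutureInextendible (γ : ℝ → M) : Prop := ∀ p : M, ¬ Tendsto γ atTop (𝓝 p)

/-- A curve (parametrized on `(-∞,0]`) is past inextendible if it has no past endpoint. -/
def PastInextendible (γ : ℝ → M) : Prop := ∀ p : M, ¬ Tendsto γ atBot (𝓝 p)

/-- Non-total imprisonment: no future-inextendible causal curve is contained in a
compact set. -/
def NonTotallyImprisoning : Prop :=
  ∀ γ : ℝ → M, S.IsCausalCurveOn γ (Ici 0) → FutureInextendible γ →
    ∀ K : Set M, IsCompact K → ¬ (γ '' Ici 0 ⊆ K)

/-- The causality condition: no closed causal curves (the causal relation is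
antisymmetric). -/
def IsCausal : Prop := ∀ x y, S.causal x y → S.causal y x → x = y

/-- Global hyperbolicity: causality plus compactness of all causal diamonds. -/
def GloballyHyperbolic : Prop :=
  S.IsCausal ∧ ∀ x z : M, IsCompact (S.JPlus x ∩ S.JMinus z)

/-- Causal simplicity: causality plus closedness of the causal relation. -/
def CausallySimple : Prop :=
  S.IsCausal ∧ IsClosed {p : M × M | S.causal p.1 p.2}

/-- Future distinction. -/
def FutureDistinguishing : Prop := ∀ x y : M, S.IPlus x = S.IPlus y → x = y

/-- Weak distinction. -/
def WeaklyDistinguishing : Prop :=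
  ∀ x y : M, S.IPlus x = S.IPlus y → S.IMinus x = S.IMinus y → x = y

/-- Reflectivity. -/
def Reflective : Prop :=
  ∀ x z : M, S.IPlus z ⊆ S.IPlus x ↔ S.IMinus x ⊆ S.IMinus z

/-- Causal continuity: weak distinction plus reflectivity. -/
def CausallyContinuous : Prop := S.WeaklyDistinguishing ∧ S.Reflective

/-- A set is causally convex if every causal curve with endpoints in it is
entirely contained in it. -/
def CausallyConvex (V : Set M) : Prop :=
  ∀ (γ : ℝ → M) (b : ℝ), 0 ≤ b → S.IsCausalCurveOn γ (Icc 0 b) →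
    γ 0 ∈ V → γ b ∈ V → γ '' Icc 0 b ⊆ V

/-- Strong causality: arbitrarily small causally convex neighborhoods. -/
def StronglyCausal : Prop :=
  ∀ x : M, ∀ U ∈ 𝓝 x, ∃ V : Set M, IsOpen V ∧ x ∈ V ∧ V ⊆ U ∧ S.CausallyConvex V

/-- The Lorentzian distance of the conformal metric `Ωg`, computed using only
causal curves whose image lies in `V` (so `distOn Ω V` is the Lorentzian
distance of the sub-spacetime `(V, Ωg|_V)` when `V` is open). -/
noncomputable def distOn (Ω : M → ℝ) (V : Set M) (p q : M) : ENNReal :=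
  ⨆ c : {c : (ℝ → M) × ℝ // 0 ≤ c.2 ∧ S.IsCausalCurveOn c.1 (Icc 0 c.2) ∧
      c.1 0 = p ∧ c.1 c.2 = q ∧ c.1 '' Icc 0 c.2 ⊆ V},
    S.lenOn Ω c.1.1 (Icc 0 c.1.2)

/-- The Lorentzian distance of the conformal metric `Ωg`. -/
noncomputable def ldist (Ω : M → ℝ) (p q : M) : ENNReal := S.distOn Ω univ p q

/-- The Lorentzian distance of the base metric `g`. -/
noncomputable def d (p q : M) : ENNReal := S.ldist (fun _ => 1) p q

/-- The chronological future of `x` within the sub-spacetime on `V`. -/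
def IPlusIn (V : Set M) (x : M) : Set M := {y | 0 < S.distOn (fun _ => 1) V x y}

end Spacetime

namespace Spacetime

variable {M : Type*} [TopologicalSpace M] (S : Spacetime M)

theorem JPlus_subset_IPlus {x' x : M} (h : S.chron x' x) : S.JPlus x ⊆ S.IPlus x' :=
  fun _ hy => S.push_down h hy

theorem JMinus_subset_IMinus {z z' : M} (h : S.chron z z') : S.JMinus z ⊆ S.IMinus z' :=
  fun _ hy => S.push_up hy h

theorem exists_causal_diamond_subset_chron_diamond (x z : M) :
    ∃ x' z', S.JPlus x ∩ S.JMinus z ⊆ S.IPlus x' ∩ S.IMinus z' := by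
  obtain ⟨x', hx'⟩ := S.chron_past x
  obtain ⟨z', hz'⟩ := S.chron_fut z
  exact ⟨x', z', inter_subset_inter (S.JPlus_subset_IPlus hx') (S.JMinus_subset_IMinus hz')⟩

end Spacetime

open Spacetime in
theorem closure_causal_diamond_compact_of_closure_chron_diamond_compact
    {M : Type*} [TopologicalSpace M] (S : Spacetime M)
    (h : ∀ x z : M, IsCompact (closure (S.IPlus x ∩ S.IMinus z))) :
    ∀ x z : M, IsCompact (closure (S.JPlus x ∩ S.JMinus z)) := by
  intro x z
  obtain ⟨x', z', hsub⟩ := S.exists_causal_diamond_subset_chron_diamond x z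
  exact (h x' z').of_isClosed_subset isClosed_closure (closure_mono hsub)
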